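/- Let M(z) = ₁F₁(3/2;1;z) and define M_{1/2,−1/2}(z) = Σ_{n=0}^{∞} [Γ(n+3/2)/(Γ(3/2)Γ(n+2))] z^n/n! (i.e., M_{α,β} with α=1/2, β=−1/2). Then for every real λ with 0 ≤ λ < 1 and every complex z, M_{1/2,−1/2}(z) = (1−λ)^{−1/2} ∫_0^1 [M(xz) − λ x M'(xz)] / √(1−λx) dx. -/

import Mathlib

open MeasureTheory Set

/-- The confluent hypergeometric function `M(z) = ₁F₁(3/2; 1; z)
  = ∑_{n=0}^∞ Γ(n+3/2)/(Γ(3/2)Γ(n+1)) · zⁿ/n!`. -/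
noncomputable def Mfun (z : ℂ) : ℂ :=
  ∑' n : ℕ,
    ((Real.Gamma ((n : ℝ) + 3/2) / (Real.Gamma (3/2) * Real.Gamma ((n : ℝ) + 1)) : ℝ) : ℂ) *
      z ^ n / (n.factorial : ℂ)

/-- `M_{1/2,−1/2}(z) = ∑_{n=0}^∞ Γ(n+3/2)/(Γ(3/2)Γ(n+2)) · zⁿ/n!`. -/
noncomputable def Mhalf (z : ℂ) : ℂ :=
  ∑' n : ℕ,
    ((Real.Gamma ((n : ℝ) + 3/2) / (Real.Gamma (3/2) * Real.Gamma ((n : ℝ) + 2)) : ℝ) : ℂ) *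
      z ^ n / (n.factorial : ℂ)

noncomputable def aco (n : ℕ) : ℝ :=
  Real.Gamma ((n : ℝ) + 3/2) / (Real.Gamma (3/2) * Real.Gamma ((n : ℝ) + 1))

lemma aco_pos (n : ℕ) : 0 < aco n := by
  have h1 : (0:ℝ) < (n:ℝ) + 3/2 := by positivity
  have h2 : (0:ℝ) < (n:ℝ) + 1 := by positivity
  exact div_pos (Real.Gamma_pos_of_pos h1)
    (mul_pos (Real.Gamma_pos_of_pos (by norm_num)) (Real.Gamma_pos_of_pos h2))

lemma aco_succ (n : ℕ) : aco (n+1) = aco n * ((n:ℝ) + 3/2) / ((n:ℝ) + 1) := by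
  have h1 : ((n+1:ℕ):ℝ) + 3/2 = ((n:ℝ) + 3/2) + 1 := by push_cast; ring
  have h2 : ((n+1:ℕ):ℝ) + 1 = ((n:ℝ) + 1) + 1 := by push_cast; ring
  have g1 : Real.Gamma (((n:ℝ)+3/2)+1) = ((n:ℝ)+3/2) * Real.Gamma ((n:ℝ)+3/2) :=
    Real.Gamma_add_one (by positivity : (0:ℝ) < (n:ℝ)+3/2).ne'
  have g2 : Real.Gamma (((n:ℝ)+1)+1) = ((n:ℝ)+1) * Real.Gamma ((n:ℝ)+1) :=
    Real.Gamma_add_one (by positivity : (0:ℝ) < (n:ℝ)+1).ne'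
  have hΓ1 : (0:ℝ) < Real.Gamma ((n:ℝ)+1) := Real.Gamma_pos_of_pos (by positivity)
  have hΓ2 : (0:ℝ) < Real.Gamma (3/2) := Real.Gamma_pos_of_pos (by norm_num)
  have hn : (0:ℝ) < (n:ℝ)+1 := by positivity
  simp only [aco, h1, h2, g1, g2]
  field_simp

lemma aco_le (n : ℕ) : aco n ≤ (n:ℝ) + 1 := by
  induction n with
  | zero =>
    have : Real.Gamma (3/2) ≠ 0 := (Real.Gamma_pos_of_pos (by norm_num)).ne'
    simp [aco, Real.Gamma_one, div_self this]
  | succ n ih =>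
    have hn : (0:ℝ) < (n:ℝ)+1 := by positivity
    have ha := aco_pos n
    rw [aco_succ, div_le_iff₀ hn]
    push_cast
    nlinarith [ih]

lemma summable_aux (r : ℝ) : Summable (fun n : ℕ => ((n:ℝ)+1) * r^n / n.factorial) := by
  have h1 : Summable (fun n : ℕ => r^n / n.factorial) := Real.summable_pow_div_factorial r
  have h2 : Summable (fun n : ℕ => ((n:ℝ)) * r^n / n.factorial) := by
    rw [← summable_nat_add_iff 1]
    have : (fun n : ℕ => ((n+1:ℕ):ℝ) * r^(n+1) / (n+1).factorial)
        = fun n : ℕ => r * (r^n / n.factorial) := by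
      funext n
      have : ((n+1).factorial : ℝ) = ((n:ℝ)+1) * n.factorial := by
        rw [Nat.factorial_succ]; push_cast; ring
      rw [this]
      have hn : ((n:ℝ)+1) ≠ 0 := by positivity
      have hf : (n.factorial : ℝ) ≠ 0 := by positivity
      field_simp
      push_cast; ring
    rw [this]
    exact h1.mul_left r
  have := h2.add h1
  convert this using 2 with n
  ring

lemma summable_term (c : ℕ → ℝ) (hc : ∀ n, 0 < c n) (hle : ∀ n, c n ≤ (n:ℝ)+1) (w : ℂ) :
    Summable (fun n : ℕ => ((c n : ℝ) : ℂ) * w^n / (n.factorial : ℂ)) := by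
  apply Summable.of_norm
  apply Summable.of_nonneg_of_le (fun n => norm_nonneg _) _ (summable_aux ‖w‖)
  intro n
  have : ‖((c n : ℝ) : ℂ) * w^n / (n.factorial : ℂ)‖ = c n * ‖w‖^n / n.factorial := by
    rw [norm_div, norm_mul, norm_pow, Complex.norm_real, Real.norm_of_nonneg (hc n).le]
    simp [Complex.norm_natCast]
  rw [this]
  gcongr
  exact hle n

lemma hasSum_Mfun (w : ℂ) :
    HasSum (fun n : ℕ => ((aco n : ℝ) : ℂ) * w^n / (n.factorial : ℂ)) (Mfun w) :=
  (summable_term aco aco_pos aco_le w).hasSum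

lemma summable_shift (w : ℂ) :
    Summable (fun n : ℕ => ((aco (n+1) : ℝ) : ℂ) * w^n / (n.factorial : ℂ)) := by
  apply Summable.of_norm
  apply Summable.of_nonneg_of_le (fun n => norm_nonneg _) _
    ((summable_aux ‖w‖).add (Real.summable_pow_div_factorial ‖w‖))
  intro n
  have h1 : ‖((aco (n+1) : ℝ) : ℂ) * w^n / (n.factorial : ℂ)‖
      = aco (n+1) * ‖w‖^n / n.factorial := by
    rw [norm_div, norm_mul, norm_pow, Complex.norm_real, Real.norm_of_nonneg (aco_pos _).le]
    simp [Complex.norm_natCast]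
  rw [h1]
  have := aco_le (n+1)
  push_cast at this
  have hw : (0:ℝ) ≤ ‖w‖^n / n.factorial := by positivity
  calc aco (n+1) * ‖w‖^n / n.factorial ≤ ((n:ℝ)+2) * ‖w‖^n / n.factorial := by
        gcongr
        linarith
    _ = ((n:ℝ)+1) * ‖w‖^n / n.factorial + ‖w‖^n / n.factorial := by ring

lemma hasSum_deriv_Mfun (w : ℂ) :
    HasSum (fun n : ℕ => ((aco (n+1) : ℝ) : ℂ) * w^n / (n.factorial : ℂ)) (deriv Mfun w) := by
  set R : ℝ := ‖w‖ + 1 with hR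
  have hRpos : 0 < R := by positivity
  set g : ℕ → ℂ → ℂ := fun n y => ((aco n : ℝ) : ℂ) * y^n / (n.factorial : ℂ) with hgdef
  set g' : ℕ → ℂ → ℂ :=
    fun n y => ((aco n : ℝ) : ℂ) * ((n:ℂ) * y^(n-1)) / (n.factorial : ℂ) with hg'def
  set u : ℕ → ℝ := fun n => ((n:ℝ)+1) * ((n:ℝ) * R^(n-1)) / n.factorial with hudef
  have hu_sum : Summable u := by
    rw [hudef, ← summable_nat_add_iff 1]
    have he : (fun n : ℕ => ((((n+1:ℕ)):ℝ)+1) * (((n+1:ℕ):ℝ) * R^((n+1)-1)) / (n+1).factorial)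
        = fun n : ℕ => ((n:ℝ)+1) * R^n / n.factorial + R^n / n.factorial := by
      funext n
      have hfac : ((n+1).factorial : ℝ) = ((n:ℝ)+1) * n.factorial := by
        rw [Nat.factorial_succ]; push_cast; ring
      have hn : ((n:ℝ)+1) ≠ 0 := by positivity
      have hf : (n.factorial : ℝ) ≠ 0 := by positivity
      simp only [Nat.add_sub_cancel, hfac]
      push_cast
      field_simp
    rw [he]
    exact (summable_aux R).add (Real.summable_pow_div_factorial R)
  have hmem : w ∈ Metric.ball (0:ℂ) R := by
    simp [Metric.mem_ball, hR]
  have hderiv : ∀ n y, y ∈ Metric.ball (0:ℂ) R → HasDerivAt (g n) (g' n y) y := by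
    intro n y _
    exact ((hasDerivAt_pow n y).const_mul (((aco n : ℝ)):ℂ)).div_const _
  have hbound : ∀ n y, y ∈ Metric.ball (0:ℂ) R → ‖g' n y‖ ≤ u n := by
    intro n y hy
    have hyR : ‖y‖ ≤ R := by
      have := Metric.mem_ball.1 hy
      rw [dist_zero_right] at this
      exact this.le
    have h1 : ‖g' n y‖ = aco n * ((n:ℝ) * ‖y‖^(n-1)) / n.factorial := by
      simp only [hg'def, norm_div, norm_mul, norm_pow, Complex.norm_real,
        Real.norm_of_nonneg (aco_pos n).le, Complex.norm_natCast]
    rw [h1]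
    simp only [hudef]
    gcongr
    exact aco_le n
  have key := hasDerivAt_tsum_of_isPreconnected hu_sum Metric.isOpen_ball
    (convex_ball (0:ℂ) R).isPreconnected hderiv hbound hmem
    (summable_term aco aco_pos aco_le w) hmem
  have hfun : (fun z => ∑' n, g n z) = Mfun := rfl
  rw [hfun] at key
  have hsum' : Summable (fun n => g' n w) := by
    apply Summable.of_norm
    exact Summable.of_nonneg_of_le (fun n => norm_nonneg _) (fun n => hbound n w hmem) hu_sum
  have hd : deriv Mfun w = ∑' n, g' n w := key.deriv
  have hshift : ∑' n, g' n w = ∑' n, ((aco (n+1) : ℝ) : ℂ) * w^n / (n.factorial : ℂ) := by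
    rw [Summable.tsum_eq_zero_add hsum']
    have hz : g' 0 w = 0 := by simp [hg'def]
    rw [hz, zero_add]
    congr 1
    funext n
    have hfac : (((n+1).factorial : ℕ) : ℂ) = ((n:ℂ)+1) * (n.factorial : ℂ) := by
      rw [Nat.factorial_succ]; push_cast; ring
    have hn : ((n:ℂ)+1) ≠ 0 := Nat.cast_add_one_ne_zero n
    have hf : ((n.factorial : ℕ) : ℂ) ≠ 0 := Nat.cast_ne_zero.2 n.factorial_ne_zero
    simp only [hg'def, Nat.add_sub_cancel, hfac]
    push_cast
    field_simp
  have := (summable_shift w).hasSum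
  rwa [← hshift, ← hd] at this

lemma ftc_term (lam : ℝ) (h0 : 0 ≤ lam) (h1 : lam < 1) (n : ℕ) :
    ∫ x in (0:ℝ)..1, (aco n * x^n - lam * aco (n+1) * x^(n+1)) / Real.sqrt (1 - lam*x)
      = Real.sqrt (1-lam) * aco n / ((n:ℝ)+1) := by
  have hpos : ∀ x ∈ Icc (0:ℝ) 1, 0 < 1 - lam*x := by
    intro x hx
    nlinarith [hx.1, hx.2]
  have huIcc : uIcc (0:ℝ) 1 = Icc (0:ℝ) 1 := uIcc_of_le zero_le_one
  set f : ℝ → ℝ := fun x => (aco n * x^n - lam * aco (n+1) * x^(n+1)) / Real.sqrt (1 - lam*x)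
    with hfdef
  set F : ℝ → ℝ := fun x => aco n / ((n:ℝ)+1) * (x^(n+1) * Real.sqrt (1 - lam*x)) with hFdef
  have hderiv : ∀ x ∈ uIcc (0:ℝ) 1, HasDerivAt F (f x) x := by
    intro x hx
    rw [huIcc] at hx
    have hx0 := hpos x hx
    have hsne : Real.sqrt (1 - lam*x) ≠ 0 := (Real.sqrt_pos.2 hx0).ne'
    have inner : HasDerivAt (fun x : ℝ => 1 - lam*x) (-lam) x := by
      simpa using ((hasDerivAt_id x).const_mul lam).const_sub 1
    have hsq : HasDerivAt (fun x : ℝ => Real.sqrt (1-lam*x))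
        (1/(2*Real.sqrt (1-lam*x)) * (-lam)) x :=
      (Real.hasDerivAt_sqrt hx0.ne').comp x inner
    have hp : HasDerivAt (fun x : ℝ => x^(n+1)) (((n:ℝ)+1)*x^n) x := by
      simpa using hasDerivAt_pow (n+1) x
    have total := (hp.mul hsq).const_mul (aco n / ((n:ℝ)+1))
    refine HasDerivAt.congr_deriv total ?_
    symm
    set s := Real.sqrt (1 - lam*x) with hs
    have hs2 : s^2 = 1 - lam*x := Real.sq_sqrt hx0.le
    have hspos : 0 < s := Real.sqrt_pos.2 hx0
    have hn1 : ((n:ℝ)+1) ≠ 0 := by positivity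
    clear_value s
    rw [hfdef]
    simp only []
    rw [← hs, aco_succ]
    field_simp
    linear_combination ((-2:ℝ)*((n:ℝ)+1)*aco n*x^n) * hs2
  have hcont : ContinuousOn f (uIcc (0:ℝ) 1) := by
    rw [huIcc]
    apply ContinuousOn.div
    · exact (Continuous.continuousOn (by continuity))
    · exact (Real.continuous_sqrt.comp (by continuity)).continuousOn
    · intro x hx
      exact (Real.sqrt_pos.2 (hpos x hx)).ne'
  have hint : IntervalIntegrable f volume 0 1 := hcont.intervalIntegrable
  rw [intervalIntegral.integral_eq_sub_of_hasDerivAt hderiv hint]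
  simp only [hFdef]
  rw [mul_zero, one_pow]
  simp
  ring

theorem stmt_15 (lam : ℝ) (h0 : 0 ≤ lam) (h1 : lam < 1) (z : ℂ) :
    Mhalf z
      = (((Real.sqrt (1 - lam))⁻¹ : ℝ) : ℂ) *
          ∫ x in (0 : ℝ)..1,
            (Mfun ((x : ℂ) * z) - (lam : ℂ) * (x : ℂ) * deriv Mfun ((x : ℂ) * z)) /
              ((Real.sqrt (1 - lam * x) : ℝ) : ℂ) := by
  have hlam1 : (0:ℝ) < 1 - lam := by linarith
  have hsq : (0:ℝ) < Real.sqrt (1 - lam) := Real.sqrt_pos.2 hlam1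
  have hpos : ∀ x ∈ Icc (0:ℝ) 1, 0 < 1 - lam*x := by
    intro x hx
    nlinarith [hx.1, hx.2]
  set r : ℕ → ℝ → ℝ :=
    fun n x => (aco n * x^n - lam * aco (n+1) * x^(n+1)) / Real.sqrt (1 - lam*x) with hrdef
  set G : ℕ → ℝ → ℂ := fun n x => ((r n x : ℝ) : ℂ) * (z^n / (n.factorial : ℂ)) with hGdef
  -- continuity and integrability of each G n
  have hrcont : ∀ n, ContinuousOn (r n) (Icc (0:ℝ) 1) := by
    intro n
    apply ContinuousOn.div
    · exact Continuous.continuousOn (by continuity)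
    · exact (Real.continuous_sqrt.comp (by continuity)).continuousOn
    · intro x hx
      exact (Real.sqrt_pos.2 (hpos x hx)).ne'
  have hGint : ∀ n, IntegrableOn (G n) (Ioc (0:ℝ) 1) volume := by
    intro n
    have : ContinuousOn (G n) (Icc (0:ℝ) 1) :=
      (Complex.continuous_ofReal.comp_continuousOn (hrcont n)).mul continuousOn_const
    exact (this.integrableOn_Icc).mono_set Ioc_subset_Icc_self
  -- pointwise bound
  set B : ℕ → ℝ := fun n => (aco n + aco (n+1)) / Real.sqrt (1-lam) * (‖z‖^n / n.factorial)
    with hBdef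
  have hGbound : ∀ n, ∀ x ∈ Ioc (0:ℝ) 1, ‖G n x‖ ≤ B n := by
    intro n x hx
    have hx' : x ∈ Icc (0:ℝ) 1 := Ioc_subset_Icc_self hx
    have hx0 : (0:ℝ) ≤ x := hx'.1
    have hx1 : x ≤ 1 := hx'.2
    have hxp : 0 < 1 - lam*x := hpos x hx'
    have hnorm : ‖G n x‖ = |r n x| * (‖z‖^n / n.factorial) := by
      rw [hGdef]
      simp only []
      rw [norm_mul, norm_div, norm_pow, Complex.norm_real, Real.norm_eq_abs,
        Complex.norm_natCast]
    rw [hnorm, hBdef]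
    simp only []
    gcongr ?_ * _
    have hnum : |aco n * x^n - lam * aco (n+1) * x^(n+1)| ≤ aco n + aco (n+1) := by
      have hb1 : 0 ≤ aco n * x^n := mul_nonneg (aco_pos n).le (pow_nonneg hx0 n)
      have hb2 : 0 ≤ lam * aco (n+1) * x^(n+1) :=
        mul_nonneg (mul_nonneg h0 (aco_pos _).le) (pow_nonneg hx0 _)
      have hb1' : aco n * x^n ≤ aco n :=
        mul_le_of_le_one_right (aco_pos n).le (pow_le_one₀ hx0 hx1)
      have hb2' : lam * aco (n+1) * x^(n+1) ≤ aco (n+1) := by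
        have s1 : lam * aco (n+1) * x^(n+1) ≤ lam * aco (n+1) :=
          mul_le_of_le_one_right (mul_nonneg h0 (aco_pos _).le) (pow_le_one₀ hx0 hx1)
        have s2 : lam * aco (n+1) ≤ aco (n+1) :=
          mul_le_of_le_one_left (aco_pos _).le h1.le
        linarith
      rw [abs_sub_le_iff]
      constructor <;> nlinarith
    have hden : Real.sqrt (1-lam) ≤ Real.sqrt (1 - lam*x) := by
      apply Real.sqrt_le_sqrt
      nlinarith
    rw [hrdef]
    simp only []
    rw [abs_div, abs_of_nonneg (Real.sqrt_nonneg _)]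
    exact div_le_div₀ (by linarith [aco_pos n, aco_pos (n+1)]) hnum hsq hden
  -- integral norm bounds and summability
  have hIntNormLe : ∀ n, (∫ x in Ioc (0:ℝ) 1, ‖G n x‖) ≤ B n := by
    intro n
    have hconst : IntegrableOn (fun _ : ℝ => B n) (Ioc (0:ℝ) 1) volume := by
      exact integrableOn_const (by rw [Real.volume_Ioc]; simp) (by simp)
    have := setIntegral_mono_on ((hGint n).norm) hconst measurableSet_Ioc (hGbound n)
    calc (∫ x in Ioc (0:ℝ) 1, ‖G n x‖) ≤ ∫ _ in Ioc (0:ℝ) 1, B n := this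
      _ = B n := by
        rw [setIntegral_const, Real.volume_real_Ioc]
        norm_num
  have hBsum : Summable B := by
    have base : Summable (fun n : ℕ => (Real.sqrt (1-lam))⁻¹ *
        (2*(((n:ℝ)+1) * ‖z‖^n / n.factorial) + ‖z‖^n / n.factorial)) :=
      (((summable_aux ‖z‖).mul_left 2).add (Real.summable_pow_div_factorial ‖z‖)).mul_left _
    apply Summable.of_nonneg_of_le _ _ base
    · intro n
      simp only [hBdef]
      have ha1 := (aco_pos n).le
      have ha2 := (aco_pos (n+1)).le
      exact mul_nonneg (div_nonneg (by linarith) (Real.sqrt_nonneg _)) (by positivity)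
    · intro n
      simp only [hBdef]
      have h1 : aco n ≤ (n:ℝ)+1 := aco_le n
      have h2 : aco (n+1) ≤ (n:ℝ)+2 := by
        have := aco_le (n+1); push_cast at this; linarith
      calc (aco n + aco (n+1)) / Real.sqrt (1-lam) * (‖z‖^n / n.factorial)
          = (Real.sqrt (1-lam))⁻¹ * ((aco n + aco (n+1)) * (‖z‖^n / n.factorial)) := by
            ring
        _ ≤ (Real.sqrt (1-lam))⁻¹ * ((2*((n:ℝ)+1)+1) * (‖z‖^n / n.factorial)) := by
            apply mul_le_mul_of_nonneg_left _ (by positivity)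
            apply mul_le_mul_of_nonneg_right _ (by positivity)
            linarith
        _ = (Real.sqrt (1-lam))⁻¹ *
              (2*(((n:ℝ)+1) * ‖z‖^n / n.factorial) + ‖z‖^n / n.factorial) := by
            ring
  have hNormSummable : Summable (fun n => ∫ x in Ioc (0:ℝ) 1, ‖G n x‖) := by
    apply Summable.of_nonneg_of_le _ hIntNormLe hBsum
    intro n
    exact integral_nonneg (fun x => norm_nonneg _)
  -- swap sum and integral
  have hswap := MeasureTheory.integral_tsum_of_summable_integral_norm
    (μ := volume.restrict (Ioc (0:ℝ) 1)) (F := G) hGint hNormSummable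
  -- pointwise series representation of the integrand
  have hptwise : ∀ x ∈ Ioc (0:ℝ) 1,
      (Mfun ((x:ℂ) * z) - (lam : ℂ) * (x:ℂ) * deriv Mfun ((x:ℂ) * z)) /
        ((Real.sqrt (1 - lam * x) : ℝ) : ℂ) = ∑' n, G n x := by
    intro x hx
    have hx' : x ∈ Icc (0:ℝ) 1 := Ioc_subset_Icc_self hx
    have hxp : 0 < 1 - lam*x := hpos x hx'
    have hsne : ((Real.sqrt (1 - lam*x) : ℝ) : ℂ) ≠ 0 :=
      Complex.ofReal_ne_zero.2 (Real.sqrt_pos.2 hxp).ne'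
    have hA := hasSum_Mfun ((x:ℂ) * z)
    have hB := hasSum_deriv_Mfun ((x:ℂ) * z)
    have hC := hA.sub (hB.mul_left ((lam : ℂ) * (x:ℂ)))
    have hD := hC.div_const ((Real.sqrt (1 - lam * x) : ℝ) : ℂ)
    rw [← hD.tsum_eq]
    apply tsum_congr
    intro n
    rw [hGdef, hrdef]
    simp only []
    rw [Complex.ofReal_div, div_mul_eq_mul_div]
    congr 1
    push_cast
    ring
  -- compute each term's integral
  have hterm : ∀ n, (∫ x in Ioc (0:ℝ) 1, G n x)
      = ((Real.sqrt (1-lam) * aco n / ((n:ℝ)+1) : ℝ) : ℂ) * (z^n / (n.factorial : ℂ)) := by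
    intro n
    rw [← intervalIntegral.integral_of_le zero_le_one]
    rw [hGdef]
    simp only []
    rw [intervalIntegral.integral_mul_const, intervalIntegral.integral_ofReal]
    rw [hrdef]
    simp only []
    rw [ftc_term lam h0 h1 n]
  -- now assemble
  rw [intervalIntegral.integral_of_le zero_le_one]
  rw [setIntegral_congr_fun measurableSet_Ioc hptwise]
  rw [← hswap]
  rw [tsum_congr hterm]
  rw [← tsum_mul_left]
  rw [Mhalf]
  apply tsum_congr
  intro n
  have hΓ2 : Real.Gamma ((n:ℝ)+2) = ((n:ℝ)+1) * Real.Gamma ((n:ℝ)+1) := by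
    have : ((n:ℝ)+2) = ((n:ℝ)+1) + 1 := by ring
    rw [this, Real.Gamma_add_one (by positivity : (0:ℝ) < (n:ℝ)+1).ne']
  have hcoef : Real.Gamma ((n:ℝ) + 3/2) / (Real.Gamma (3/2) * Real.Gamma ((n:ℝ)+2))
      = aco n / ((n:ℝ)+1) := by
    rw [hΓ2, aco, div_div]
    congr 1
    ring
  rw [hcoef]
  have hsqne : (Real.sqrt (1-lam) : ℂ) ≠ 0 := Complex.ofReal_ne_zero.2 hsq.ne'
  have hn1 : ((n:ℂ)+1) ≠ 0 := Nat.cast_add_one_ne_zero n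
  have hf : ((n.factorial : ℕ) : ℂ) ≠ 0 := Nat.cast_ne_zero.2 n.factorial_ne_zero
  push_cast
  field_simp [hsqne, hn1, hf]
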